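/- Let X be a real vector space with dim X = 3, K ⊂ X a convex body with 0 in its interior, and R : X* → End(X) a linear map with tr R(λ) = 0 for all λ ∈ X*, satisfying the tangency assumption: for every λ ∈ X* and every x ∈ ∂K with λ(x) = 0, the vector R_λ(x) is tangent to ∂K at x. Then for all λ, μ ∈ X*, the quadratic vector field V^R_{λ,μ} is tangent to ∂K. -/
import Mathlib


open Filter Topology

/-- `v` is *forward tangent* to `∂B` at `x` if there are a sequence `p i ∈ ∂B` with `p i → x`
and positive reals `c i` with `c i • (p i - x) → v`. -/
def IsForwardTangent {X : Type*} [NormedAddCommGroup X] [NormedSpace ℝ X]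
    (B : Set X) (x v : X) : Prop :=
  ∃ (p : ℕ → X) (c : ℕ → ℝ), (∀ i, p i ∈ frontier B) ∧ (∀ i, 0 < c i) ∧
    Tendsto p atTop (𝓝 x) ∧ Tendsto (fun i => c i • (p i - x)) atTop (𝓝 v)

/-- `v` is *tangent* to `∂B` at `x` if both `v` and `-v` are forward tangent to `∂B` at `x`. -/
def IsTangentVec {X : Type*} [NormedAddCommGroup X] [NormedSpace ℝ X]
    (B : Set X) (x v : X) : Prop :=
  IsForwardTangent B x v ∧ IsForwardTangent B x (-v)

/-- For a linear map `R : X* → End(X)` and `λ, μ ∈ X*`, the quadratic vector field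
`V^R_{λ,μ}(x) = μ(x) • R_λ(x) - λ(x) • R_μ(x)`. -/
def VR {X : Type*} [AddCommGroup X] [Module ℝ X]
    (R : Module.Dual ℝ X →ₗ[ℝ] (X →ₗ[ℝ] X))
    (lam mu : Module.Dual ℝ X) (x : X) : X :=
  mu x • R lam x - lam x • R mu x

/-- **Lemma.**  Let `dim X = 3`, `K ⊂ X` a convex body with `0` in its interior and
`R : X* → End(X)` a linear map with trace-free values satisfying the tangency assumption:
`R_λ(x)` is tangent to `∂K` at `x` whenever `x ∈ ∂K` and `λ(x) = 0`.  Then for all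
`λ, μ ∈ X*`, the quadratic vector field `V^R_{λ,μ}` is tangent to `∂K`. -/
theorem VR_tangent
    {X : Type*} [NormedAddCommGroup X] [NormedSpace ℝ X]
    (hdim : Module.finrank ℝ X = 3)
    (K : Set X) (hKcomp : IsCompact K) (hKconv : Convex ℝ K)
    (h0 : (0 : X) ∈ interior K)
    (R : Module.Dual ℝ X →ₗ[ℝ] (X →ₗ[ℝ] X))
    (htr : ∀ lam : Module.Dual ℝ X, LinearMap.trace ℝ X (R lam) = 0)
    (htang : ∀ lam : Module.Dual ℝ X, ∀ x ∈ frontier K, lam x = 0 →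
      IsTangentVec K x (R lam x)) :
    ∀ lam mu : Module.Dual ℝ X, ∀ x ∈ frontier K, IsTangentVec K x (VR R lam mu x) := by
  intro lam mu x hx
  have h := htang (mu x • lam - lam x • mu) x hx (by simp [smul_eq_mul]; ring)
  have heq : R (mu x • lam - lam x • mu) x = VR R lam mu x := by
    simp [VR, map_sub, map_smul]
  rwa [heq] at h
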